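/- Let H be a real Hilbert space, F : H → ℝ differentiable with β-Lipschitz gradient for some β > 0 and bounded below on a nonempty closed convex set K ⊆ H. Let (λ_k)_{k ≥ 1} be generated by inexact projected gradient descent: λ₁ ∈ K and λ_{k+1} = proj_K(λ_k − (1/β) g_k), where g_k ∈ H satisfies ‖∇F(λ_k) − g_k‖ ≤ B_k with Σ_{k=1}^∞ B_k² < ∞. Then Σ_{k=1}^∞ ‖λ_{k+1} − λ_k‖² < ∞; in particular ‖λ_{k+1} − λ_k‖ → 0 as k → ∞. -/

import Mathlib

/-!
The descent lemma for a `β`-smooth `F`, combined with the variational inequality of the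
projection onto the convex set `K` and Young's inequality for the gradient error, gives
`‖λ_{k+1} - λ_k‖² ≤ (4/β) (F λ_k - F λ_{k+1}) + (4/β²) B_k²`. Summing telescopes the `F` terms,
which stay bounded because `F` is bounded below on `K ∋ λ_k`.
-/

/-- `q` is the metric projection of `p` onto the set `K`: `q ∈ K` and `q` is a closest
point of `K` to `p`. -/
def IsProjOn {H : Type*} [NormedAddCommGroup H] (K : Set H) (p q : H) : Prop :=
  q ∈ K ∧ ∀ y ∈ K, ‖p - q‖ ≤ ‖p - y‖

open Set
open scoped NNReal RealInnerProductSpace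

theorem le_add_deriv_add_of_deriv_sub_le {φ φ' : ℝ → ℝ} {L : ℝ}
    (hφ : ∀ t, HasDerivAt φ (φ' t) t) (hL : ∀ t ∈ Ioo (0 : ℝ) 1, φ' t - φ' 0 ≤ L * t) :
    φ 1 ≤ φ 0 + φ' 0 + L / 2 := by
  set ψ : ℝ → ℝ := fun t => φ t - t * φ' 0 - L / 2 * t ^ 2
  have hψ : ∀ t, HasDerivAt ψ (φ' t - φ' 0 - L * t) t := fun t => by
    refine (((hφ t).sub ((hasDerivAt_id t).mul_const (φ' 0))).sub
      ((hasDerivAt_pow 2 t).const_mul (L / 2))).congr_deriv ?_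
    norm_num
    ring
  have hanti : AntitoneOn ψ (Icc 0 1) := by
    refine antitoneOn_of_hasDerivWithinAt_nonpos (convex_Icc 0 1)
      (fun t _ => (hψ t).continuousAt.continuousWithinAt) (fun t _ => (hψ t).hasDerivWithinAt) ?_
    rw [interior_Icc]
    exact fun t ht => sub_nonpos.mpr (hL t ht)
  have := hanti (left_mem_Icc.mpr zero_le_one) (right_mem_Icc.mpr zero_le_one) zero_le_one
  simp only [ψ] at this
  linarith

section InnerProductSpace

variable {H : Type*} [NormedAddCommGroup H] [InnerProductSpace ℝ H]

theorem le_add_inner_add_of_lipschitzWith_gradient [CompleteSpace H] {F : H → ℝ} {F' : H → H}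
    {L : ℝ≥0} (hF : ∀ x, HasGradientAt F (F' x) x) (hlip : LipschitzWith L F') (x y : H) :
    F y ≤ F x + ⟪F' x, y - x⟫ + L / 2 * ‖y - x‖ ^ 2 := by
  set v := y - x
  have hφ : ∀ t : ℝ, HasDerivAt (fun t => F (x + t • v)) ⟪F' (x + t • v), v⟫ t := fun t => by
    have hline : HasDerivAt (fun t : ℝ => x + t • v) v t := by
      simpa using ((hasDerivAt_id t).smul_const v).const_add x
    simpa [Function.comp_def] using (hF (x + t • v)).hasFDerivAt.comp_hasDerivAt t hline
  have hL : ∀ t ∈ Ioo (0 : ℝ) 1,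
      ⟪F' (x + t • v), v⟫ - ⟪F' (x + (0 : ℝ) • v), v⟫ ≤ (L * ‖v‖ ^ 2) * t := by
    intro t ht
    calc ⟪F' (x + t • v), v⟫ - ⟪F' (x + (0 : ℝ) • v), v⟫
        = ⟪F' (x + t • v) - F' x, v⟫ := by rw [zero_smul, add_zero, inner_sub_left]
      _ ≤ ‖F' (x + t • v) - F' x‖ * ‖v‖ := real_inner_le_norm _ _
      _ ≤ L * ‖t • v‖ * ‖v‖ := by
          gcongr
          simpa [dist_eq_norm] using hlip.dist_le_mul (x + t • v) x
      _ = (L * ‖v‖ ^ 2) * t := by rw [norm_smul, Real.norm_of_nonneg ht.1.le]; ring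
  have := le_add_deriv_add_of_deriv_sub_le hφ hL
  simp only [zero_smul, add_zero, one_smul, v, add_sub_cancel] at this
  linarith

theorem IsProjOn.inner_sub_le_zero {K : Set H} {p q : H} (h : IsProjOn K p q)
    (hK : Convex ℝ K) {w : H} (hw : w ∈ K) : ⟪p - q, w - q⟫ ≤ 0 := by
  have : Nonempty K := ⟨⟨q, h.1⟩⟩
  refine (norm_eq_iInf_iff_real_inner_le_zero hK h.1).mp ?_ w hw
  exact le_antisymm (le_ciInf fun w => h.2 w w.2)
    (ciInf_le ⟨0, Set.forall_mem_range.mpr fun w : K => norm_nonneg (p - w)⟩ (⟨q, h.1⟩ : K))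

theorem IsProjOn.inner_sub_le_neg_mul_sq {K : Set H} {x g q : H} {β : ℝ} (hβ : 0 < β)
    (h : IsProjOn K (x - (1 / β) • g) q) (hK : Convex ℝ K) (hx : x ∈ K) :
    ⟪g, q - x⟫ ≤ -β * ‖q - x‖ ^ 2 := by
  have hvar := h.inner_sub_le_zero hK hx
  have hsplit : x - (1 / β) • g - q = -(q - x) - (1 / β) • g := by abel
  rw [hsplit, ← neg_sub q x, inner_sub_left, inner_neg_neg, real_inner_self_eq_norm_sq,
    inner_neg_right, real_inner_smul_left] at hvar
  have := mul_le_mul_of_nonneg_left hvar hβ.le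
  field_simp at this
  linarith

theorem IsProjOn.sq_norm_sub_le [CompleteSpace H] {F : H → ℝ} {F' : H → H}
    (hF : ∀ x, HasGradientAt F (F' x) x) {β : ℝ} (hβ : 0 < β) (hlip : LipschitzWith β.toNNReal F')
    {K : Set H} (hK : Convex ℝ K) {x g q : H} {b : ℝ} (h : IsProjOn K (x - (1 / β) • g) q)
    (hx : x ∈ K) (hb : ‖F' x - g‖ ≤ b) :
    ‖q - x‖ ^ 2 ≤ 4 / β * (F x - F q) + 4 / β ^ 2 * b ^ 2 := by
  set s := ‖q - x‖
  have hdescent := le_add_inner_add_of_lipschitzWith_gradient hF hlip x q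
  rw [Real.coe_toNNReal _ hβ.le] at hdescent
  have herror : ⟪F' x - g, q - x⟫ ≤ b * s :=
    (real_inner_le_norm _ _).trans (mul_le_mul_of_nonneg_right hb (norm_nonneg _))
  have hstep := h.inner_sub_le_neg_mul_sq hβ hK hx
  have hdecrease : F q ≤ F x + b * s - β / 2 * s ^ 2 := by
    rw [inner_sub_left] at herror
    linarith
  have hyoung : b * s ≤ b ^ 2 / β + β / 4 * s ^ 2 := by
    rw [← sub_nonneg]
    have : b ^ 2 / β + β / 4 * s ^ 2 - b * s = (b - β / 2 * s) ^ 2 / β := by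
      field_simp
      ring
    rw [this]
    positivity
  calc s ^ 2 = 4 / β * (β / 4 * s ^ 2) := by field_simp
    _ ≤ 4 / β * (F x - F q + b ^ 2 / β) := by gcongr; linarith
    _ = 4 / β * (F x - F q) + 4 / β ^ 2 * b ^ 2 := by ring

end InnerProductSpace

theorem summable_of_le_sub_succ_add {a f e : ℕ → ℝ} {c : ℝ} (ha : ∀ k, 0 ≤ a k)
    (hle : ∀ k, a k ≤ f k - f (k + 1) + e k) (hf : ∀ k, c ≤ f k) (he₀ : ∀ k, 0 ≤ e k)
    (he : Summable e) : Summable a := by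
  refine summable_of_sum_range_le ha (c := f 0 - c + ∑' k, e k) fun n => ?_
  calc ∑ k ∈ Finset.range n, a k
      ≤ ∑ k ∈ Finset.range n, (f k - f (k + 1) + e k) := Finset.sum_le_sum fun k _ => hle k
    _ = f 0 - f n + ∑ k ∈ Finset.range n, e k := by
        rw [Finset.sum_add_distrib, Finset.sum_range_sub']
    _ ≤ f 0 - c + ∑' k, e k := by
        gcongr
        · exact hf n
        · exact he.sum_le_tsum _ fun k _ => he₀ k

theorem inexact_projected_gradient_summable_steps_general
    {H : Type*} [NormedAddCommGroup H] [InnerProductSpace ℝ H] [CompleteSpace H]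
    (F : H → ℝ) (F' : H → H) (hF : ∀ x, HasGradientAt F (F' x) x)
    (β : ℝ) (hβ : 0 < β) (hlip : LipschitzWith β.toNNReal F')
    (K : Set H) (hKconv : Convex ℝ K)
    (c : ℝ) (hbelow : ∀ z ∈ K, c ≤ F z)
    (lam : ℕ → H) (g : ℕ → H) (B : ℕ → ℝ)
    (hlam0 : lam 0 ∈ K)
    (hstep : ∀ k, IsProjOn K (lam k - (1 / β) • g k) (lam (k + 1)))
    (hB : ∀ k, ‖F' (lam k) - g k‖ ≤ B k)
    (hBsum : Summable fun k => B k ^ 2) :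
    (Summable fun k => ‖lam (k + 1) - lam k‖ ^ 2) ∧
      Filter.Tendsto (fun k => ‖lam (k + 1) - lam k‖) Filter.atTop (nhds 0) := by
  have hmem : ∀ k, lam k ∈ K := Nat.rec hlam0 fun k _ => (hstep k).1
  have hsum : Summable fun k => ‖lam (k + 1) - lam k‖ ^ 2 := by
    refine summable_of_le_sub_succ_add (f := fun k => 4 / β * F (lam k))
      (e := fun k => 4 / β ^ 2 * B k ^ 2) (c := 4 / β * c) (fun k => by positivity)
      (fun k => ?_) (fun k => by gcongr; exact hbelow _ (hmem k)) (fun k => by positivity)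
      (hBsum.mul_left _)
    rw [← mul_sub]
    exact (hstep k).sq_norm_sub_le hF hβ hlip hKconv (hmem k) (hB k)
  refine ⟨hsum, ?_⟩
  simpa [Real.sqrt_sq (norm_nonneg _)] using hsum.tendsto_atTop_zero.sqrt

/-- Summable squared steps of inexact projected gradient descent: if `∇F` is `β`-Lipschitz,
`F` is bounded below on `K`, and the gradient-estimate errors `B k` are square-summable,
then `Σ ‖λ_{k+1} - λ_k‖² < ∞` and in particular `‖λ_{k+1} - λ_k‖ → 0`. -/
theorem inexact_projected_gradient_summable_steps
    {H : Type*} [NormedAddCommGroup H] [InnerProductSpace ℝ H] [CompleteSpace H]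
    (F : H → ℝ) (F' : H → H) (hF : ∀ x, HasGradientAt F (F' x) x)
    (β : ℝ) (hβ : 0 < β) (hlip : LipschitzWith β.toNNReal F')
    (K : Set H) (hKne : K.Nonempty) (hKc : IsClosed K) (hKconv : Convex ℝ K)
    (c : ℝ) (hbelow : ∀ z ∈ K, c ≤ F z)
    (lam : ℕ → H) (g : ℕ → H) (B : ℕ → ℝ)
    (hlam0 : lam 0 ∈ K)
    (hstep : ∀ k, IsProjOn K (lam k - (1 / β) • g k) (lam (k + 1)))
    (hB : ∀ k, ‖F' (lam k) - g k‖ ≤ B k)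
    (hBsum : Summable fun k => B k ^ 2) :
    (Summable fun k => ‖lam (k + 1) - lam k‖ ^ 2) ∧
      Filter.Tendsto (fun k => ‖lam (k + 1) - lam k‖) Filter.atTop (nhds 0) :=
  inexact_projected_gradient_summable_steps_general F F' hF β hβ hlip K hKconv c hbelow lam g B
    hlam0 hstep hB hBsum
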